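/- Equivalence of matrix MPC and MAP inference (Theorem 1): Consider the cost J = Σ_{t=k}^{k+H} [tr((X_t - X^ref)^T R⁻¹ (X_t - X^ref)) + tr((U_t - U^ref)^T Q_U⁻¹ (U_t - U^ref)) + tr(ΔU_{t+1}^T Q_{ΔU}⁻¹ ΔU_{t+1})], and the log-posterior of the virtual system in which X^ref = X_t + V_{X,t}, U^ref = U_t + V_{U,t}, ΔU_{t+1} = W_t with mutually independent matrix normal noises W_t ~ MN(0; Σ_W, Ψ_W), V_{X,t} ~ MN(0; Σ_{V_X}, Ψ_{V_X}), V_{U,t} ~ MN(0; Σ_{V_U}, Ψ_{V_U}). If Σ_{V_X} ⊗ Ψ_{V_X} = I ⊗ R, Σ_{V_U} ⊗ Ψ_{V_U} = I ⊗ Q_U, and Σ_W ⊗ Ψ_W = I ⊗ Q_{ΔU}, then the log-posterior equals -J up to an additive constant, so the MPC minimizers coincide with the MAP maximizers. -/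

import Mathlib

open Matrix Kronecker Finset

/-- The matrix normal density `MN(M; S, P)` evaluated at `X ∈ ℝ^{n×m}`. -/
noncomputable def mnPDF {n m : ℕ} (M : Matrix (Fin n) (Fin m) ℝ)
    (S : Matrix (Fin n) (Fin n) ℝ) (P : Matrix (Fin m) (Fin m) ℝ)
    (X : Matrix (Fin n) (Fin m) ℝ) : ℝ :=
  (2 * Real.pi) ^ (-(n * m : ℝ) / 2) * S.det ^ (-(m : ℝ) / 2) * P.det ^ (-(n : ℝ) / 2) *
    Real.exp (-(1 / 2) * Matrix.trace (S⁻¹ * (X - M) * P⁻¹ * (X - M)ᵀ))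

/-- The matrix-based MPC tracking cost `J` over the horizon. -/
noncomputable def mpcCost {n l m H : ℕ}
    (R : Matrix (Fin n) (Fin n) ℝ) (QU QdU : Matrix (Fin l) (Fin l) ℝ)
    (Xref : Matrix (Fin n) (Fin m) ℝ) (Uref : Matrix (Fin l) (Fin m) ℝ)
    (X : Fin (H + 1) → Matrix (Fin n) (Fin m) ℝ)
    (U : Fin (H + 1) → Matrix (Fin l) (Fin m) ℝ)
    (dU : Fin (H + 1) → Matrix (Fin l) (Fin m) ℝ) : ℝ :=
  ∑ t : Fin (H + 1),
    (Matrix.trace ((X t - Xref)ᵀ * R⁻¹ * (X t - Xref)) +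
      Matrix.trace ((U t - Uref)ᵀ * QU⁻¹ * (U t - Uref)) +
      Matrix.trace ((dU t)ᵀ * QdU⁻¹ * (dU t)))

/-- The log-posterior of the virtual system: the virtual observations are
`X^ref = X_t + V_{X,t}`, `U^ref = U_t + V_{U,t}`, and the increments `ΔU_{t+1} = W_t` have
matrix normal priors. -/
noncomputable def logPosterior {n l m H : ℕ}
    (SVX : Matrix (Fin n) (Fin n) ℝ) (PVX : Matrix (Fin m) (Fin m) ℝ)
    (SVU SW : Matrix (Fin l) (Fin l) ℝ) (PVU PW : Matrix (Fin m) (Fin m) ℝ)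
    (Xref : Matrix (Fin n) (Fin m) ℝ) (Uref : Matrix (Fin l) (Fin m) ℝ)
    (X : Fin (H + 1) → Matrix (Fin n) (Fin m) ℝ)
    (U : Fin (H + 1) → Matrix (Fin l) (Fin m) ℝ)
    (dU : Fin (H + 1) → Matrix (Fin l) (Fin m) ℝ) : ℝ :=
  ∑ t : Fin (H + 1),
    (Real.log (mnPDF (X t) SVX PVX Xref) + Real.log (mnPDF (U t) SVU PVU Uref) +
      Real.log (mnPDF 0 SW PW (dU t)))


/-!
Each factor of the posterior is a matrix normal density, whose logarithm is its log-normaliser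
minus half the trace form `tr (Σ⁻¹ A Ψ⁻¹ Aᵀ)`. Vectorising, this form is
`vec A ⬝ (Ψ⁻¹ ⊗ Σ⁻¹) vec A` (using `Ψᵀ = Ψ`), and inverting the Kronecker hypothesis
`Ψ ⊗ Σ = I ⊗ R` turns it into `vec A ⬝ (I ⊗ R⁻¹) vec A = tr (Aᵀ R⁻¹ A)`, the corresponding MPC
stage cost. Summed over the horizon, the log-posterior is `-J / 2` plus a constant, so it orders
trajectories exactly opposite to `J`.
-/

namespace Matrix

theorem reindex_prodComm_kronecker {K m n : Type*} [CommMagma K] (A : Matrix n n K)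
    (B : Matrix m m K) :
    reindex (Equiv.prodComm n m) (Equiv.prodComm n m) (A ⊗ₖ B) = B ⊗ₖ A := by
  ext ⟨j, i⟩ ⟨j', i'⟩
  simp [mul_comm]

variable {K : Type*} [CommRing K] {m n : Type*} [Fintype m] [Fintype n]

theorem trace_transpose_mul_mul_mul_eq_vec_dotProduct (A : Matrix n m K) (S : Matrix n n K)
    (P : Matrix m m K) :
    trace (Aᵀ * S * A * P) = vec A ⬝ᵥ (Pᵀ ⊗ₖ S) *ᵥ vec A := by
  rw [kronecker_mulVec_vec, vec_dotProduct_vec, transpose_transpose, Matrix.mul_assoc,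
    Matrix.mul_assoc, Matrix.mul_assoc]

variable [DecidableEq m] [DecidableEq n]

theorem trace_inv_mul_mul_inv_mul_transpose_of_kronecker_eq {S R : Matrix n n K}
    {P : Matrix m m K} (hP : P.IsSymm) (h : P ⊗ₖ S = 1 ⊗ₖ R) (A : Matrix n m K) :
    trace (S⁻¹ * A * P⁻¹ * Aᵀ) = trace (Aᵀ * R⁻¹ * A) := by
  have hinv : P⁻¹ ⊗ₖ S⁻¹ = 1 ⊗ₖ R⁻¹ := by rw [← inv_kronecker, h, inv_kronecker, inv_one]
  calc trace (S⁻¹ * A * P⁻¹ * Aᵀ) = trace (Aᵀ * S⁻¹ * A * P⁻¹) := by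
        rw [trace_mul_comm, Matrix.mul_assoc Aᵀ, Matrix.mul_assoc Aᵀ]
    _ = vec A ⬝ᵥ (1ᵀ ⊗ₖ R⁻¹) *ᵥ vec A := by
        rw [trace_transpose_mul_mul_mul_eq_vec_dotProduct, transpose_nonsing_inv, hP.eq, hinv,
          transpose_one]
    _ = trace (Aᵀ * R⁻¹ * A) := by
        rw [← trace_transpose_mul_mul_mul_eq_vec_dotProduct, Matrix.mul_one]

end Matrix

noncomputable def mnNormalizer {n m : ℕ} (S : Matrix (Fin n) (Fin n) ℝ)
    (P : Matrix (Fin m) (Fin m) ℝ) : ℝ :=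
  (2 * Real.pi) ^ (-(n * m : ℝ) / 2) * S.det ^ (-(m : ℝ) / 2) * P.det ^ (-(n : ℝ) / 2)

section MatrixNormal

variable {n m : ℕ} {S : Matrix (Fin n) (Fin n) ℝ} {P : Matrix (Fin m) (Fin m) ℝ}

theorem mnNormalizer_pos (hS : 0 < S.det) (hP : 0 < P.det) : 0 < mnNormalizer S P := by
  unfold mnNormalizer
  have := Real.pi_pos
  positivity

theorem mnPDF_comm (M X : Matrix (Fin n) (Fin m) ℝ) : mnPDF M S P X = mnPDF X S P M := by
  rw [mnPDF, mnPDF, ← neg_sub X M]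
  simp only [transpose_neg, Matrix.mul_neg, Matrix.neg_mul, neg_neg]

theorem log_mnPDF (hS : 0 < S.det) (hP : 0 < P.det) (M X : Matrix (Fin n) (Fin m) ℝ) :
    Real.log (mnPDF M S P X) =
      Real.log (mnNormalizer S P) - 1 / 2 * trace (S⁻¹ * (X - M) * P⁻¹ * (X - M)ᵀ) := by
  rw [mnPDF, ← mnNormalizer, Real.log_mul (mnNormalizer_pos hS hP).ne' (Real.exp_ne_zero _),
    Real.log_exp]
  ring

theorem log_mnPDF_of_kronecker_eq {R : Matrix (Fin n) (Fin n) ℝ} (hS : 0 < S.det)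
    (hP : P.PosDef) (hk : S ⊗ₖ P = reindex (Equiv.prodComm (Fin m) (Fin n))
      (Equiv.prodComm (Fin m) (Fin n)) ((1 : Matrix (Fin m) (Fin m) ℝ) ⊗ₖ R))
    (M X : Matrix (Fin n) (Fin m) ℝ) :
    Real.log (mnPDF M S P X) =
      Real.log (mnNormalizer S P) - 1 / 2 * trace ((X - M)ᵀ * R⁻¹ * (X - M)) := by
  have hk' : P ⊗ₖ S = 1 ⊗ₖ R := by
    rw [← reindex_prodComm_kronecker, hk]
    ext
    simp
  rw [log_mnPDF hS hP.det_pos, trace_inv_mul_mul_inv_mul_transpose_of_kronecker_eq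
    (isHermitian_iff_isSymm.mp hP.isHermitian) hk']

end MatrixNormal

theorem logPosterior_eq_neg_half_mpcCost_add {n l m H : ℕ}
    {R : Matrix (Fin n) (Fin n) ℝ} {QU QdU : Matrix (Fin l) (Fin l) ℝ}
    {SVX : Matrix (Fin n) (Fin n) ℝ} {PVX : Matrix (Fin m) (Fin m) ℝ}
    {SVU SW : Matrix (Fin l) (Fin l) ℝ} {PVU PW : Matrix (Fin m) (Fin m) ℝ}
    (hSVX : 0 < SVX.det) (hPVX : PVX.PosDef) (hSVU : 0 < SVU.det) (hPVU : PVU.PosDef)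
    (hSW : 0 < SW.det) (hPW : PW.PosDef)
    (hkX : SVX ⊗ₖ PVX = reindex (Equiv.prodComm (Fin m) (Fin n))
      (Equiv.prodComm (Fin m) (Fin n)) ((1 : Matrix (Fin m) (Fin m) ℝ) ⊗ₖ R))
    (hkU : SVU ⊗ₖ PVU = reindex (Equiv.prodComm (Fin m) (Fin l))
      (Equiv.prodComm (Fin m) (Fin l)) ((1 : Matrix (Fin m) (Fin m) ℝ) ⊗ₖ QU))
    (hkW : SW ⊗ₖ PW = reindex (Equiv.prodComm (Fin m) (Fin l))
      (Equiv.prodComm (Fin m) (Fin l)) ((1 : Matrix (Fin m) (Fin m) ℝ) ⊗ₖ QdU))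
    (Xref : Matrix (Fin n) (Fin m) ℝ) (Uref : Matrix (Fin l) (Fin m) ℝ)
    (X : Fin (H + 1) → Matrix (Fin n) (Fin m) ℝ) (U dU : Fin (H + 1) → Matrix (Fin l) (Fin m) ℝ) :
    logPosterior SVX PVX SVU SW PVU PW Xref Uref X U dU =
      -(1 / 2) * mpcCost R QU QdU Xref Uref X U dU +
        (H + 1) * (Real.log (mnNormalizer SVX PVX) + Real.log (mnNormalizer SVU PVU) +
          Real.log (mnNormalizer SW PW)) := by
  have hconst : ∀ c : ℝ, (H + 1) * c = ∑ _t : Fin (H + 1), c := by simp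
  rw [logPosterior, mpcCost, hconst, Finset.mul_sum, ← Finset.sum_add_distrib]
  refine Finset.sum_congr rfl fun t _ => ?_
  rw [mnPDF_comm (X t), mnPDF_comm (U t), log_mnPDF_of_kronecker_eq hSVX hPVX hkX,
    log_mnPDF_of_kronecker_eq hSVU hPVU hkU, log_mnPDF_of_kronecker_eq hSW hPW hkW, sub_zero]
  ring

theorem stmt11_general {n l m H : ℕ}
    (R : Matrix (Fin n) (Fin n) ℝ) (QU QdU : Matrix (Fin l) (Fin l) ℝ)
    (SVX : Matrix (Fin n) (Fin n) ℝ) (PVX : Matrix (Fin m) (Fin m) ℝ)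
    (SVU SW : Matrix (Fin l) (Fin l) ℝ) (PVU PW : Matrix (Fin m) (Fin m) ℝ)
    (hSVX : SVX.PosDef) (hPVX : PVX.PosDef) (hSVU : SVU.PosDef) (hPVU : PVU.PosDef)
    (hSW : SW.PosDef) (hPW : PW.PosDef)
    (hkX : SVX ⊗ₖ PVX =
      Matrix.reindex (Equiv.prodComm (Fin m) (Fin n)) (Equiv.prodComm (Fin m) (Fin n))
        ((1 : Matrix (Fin m) (Fin m) ℝ) ⊗ₖ R))
    (hkU : SVU ⊗ₖ PVU =
      Matrix.reindex (Equiv.prodComm (Fin m) (Fin l)) (Equiv.prodComm (Fin m) (Fin l))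
        ((1 : Matrix (Fin m) (Fin m) ℝ) ⊗ₖ QU))
    (hkW : SW ⊗ₖ PW =
      Matrix.reindex (Equiv.prodComm (Fin m) (Fin l)) (Equiv.prodComm (Fin m) (Fin l))
        ((1 : Matrix (Fin m) (Fin m) ℝ) ⊗ₖ QdU))
    (Xref : Matrix (Fin n) (Fin m) ℝ) (Uref : Matrix (Fin l) (Fin m) ℝ) :
    (∃ c : ℝ, ∀ (X : Fin (H + 1) → Matrix (Fin n) (Fin m) ℝ)
        (U dU : Fin (H + 1) → Matrix (Fin l) (Fin m) ℝ),
        logPosterior SVX PVX SVU SW PVU PW Xref Uref X U dU =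
          -(1 / 2) * mpcCost R QU QdU Xref Uref X U dU + c) ∧
      (∀ (X X' : Fin (H + 1) → Matrix (Fin n) (Fin m) ℝ)
        (U U' dU dU' : Fin (H + 1) → Matrix (Fin l) (Fin m) ℝ),
        mpcCost R QU QdU Xref Uref X U dU ≤ mpcCost R QU QdU Xref Uref X' U' dU' ↔
          logPosterior SVX PVX SVU SW PVU PW Xref Uref X' U' dU' ≤
            logPosterior SVX PVX SVU SW PVU PW Xref Uref X U dU) := by
  have hlog := logPosterior_eq_neg_half_mpcCost_add (H := H) hSVX.det_pos hPVX hSVU.det_pos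
    hPVU hSW.det_pos hPW hkX hkU hkW Xref Uref
  refine ⟨⟨_, hlog⟩, fun X X' U U' dU dU' => ?_⟩
  rw [hlog X U dU, hlog X' U' dU']
  constructor <;> intro h <;> linarith

/-- Theorem 1: if `Σ_{V_X} ⊗ Ψ_{V_X} = I ⊗ R`, `Σ_{V_U} ⊗ Ψ_{V_U} = I ⊗ Q_U`,
and `Σ_W ⊗ Ψ_W = I ⊗ Q_{ΔU}` (indices matched via the product-swap reindexing), with all
matrices positive definite and the noises mutually independent, then the log-posterior of the
virtual system is an additive constant minus `½ J`; consequently the MPC minimizers coincide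
with the MAP maximizers. -/
theorem stmt11 {n l m H : ℕ}
    (R : Matrix (Fin n) (Fin n) ℝ) (QU QdU : Matrix (Fin l) (Fin l) ℝ)
    (hR : R.PosDef) (hQU : QU.PosDef) (hQdU : QdU.PosDef)
    (SVX : Matrix (Fin n) (Fin n) ℝ) (PVX : Matrix (Fin m) (Fin m) ℝ)
    (SVU SW : Matrix (Fin l) (Fin l) ℝ) (PVU PW : Matrix (Fin m) (Fin m) ℝ)
    (hSVX : SVX.PosDef) (hPVX : PVX.PosDef) (hSVU : SVU.PosDef) (hPVU : PVU.PosDef)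
    (hSW : SW.PosDef) (hPW : PW.PosDef)
    (hkX : SVX ⊗ₖ PVX =
      Matrix.reindex (Equiv.prodComm (Fin m) (Fin n)) (Equiv.prodComm (Fin m) (Fin n))
        ((1 : Matrix (Fin m) (Fin m) ℝ) ⊗ₖ R))
    (hkU : SVU ⊗ₖ PVU =
      Matrix.reindex (Equiv.prodComm (Fin m) (Fin l)) (Equiv.prodComm (Fin m) (Fin l))
        ((1 : Matrix (Fin m) (Fin m) ℝ) ⊗ₖ QU))
    (hkW : SW ⊗ₖ PW =
      Matrix.reindex (Equiv.prodComm (Fin m) (Fin l)) (Equiv.prodComm (Fin m) (Fin l))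
        ((1 : Matrix (Fin m) (Fin m) ℝ) ⊗ₖ QdU))
    (Xref : Matrix (Fin n) (Fin m) ℝ) (Uref : Matrix (Fin l) (Fin m) ℝ) :
    (∃ c : ℝ, ∀ (X : Fin (H + 1) → Matrix (Fin n) (Fin m) ℝ)
        (U dU : Fin (H + 1) → Matrix (Fin l) (Fin m) ℝ),
        logPosterior SVX PVX SVU SW PVU PW Xref Uref X U dU =
          -(1 / 2) * mpcCost R QU QdU Xref Uref X U dU + c) ∧
      (∀ (X X' : Fin (H + 1) → Matrix (Fin n) (Fin m) ℝ)
        (U U' dU dU' : Fin (H + 1) → Matrix (Fin l) (Fin m) ℝ),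
        mpcCost R QU QdU Xref Uref X U dU ≤ mpcCost R QU QdU Xref Uref X' U' dU' ↔
          logPosterior SVX PVX SVU SW PVU PW Xref Uref X' U' dU' ≤
            logPosterior SVX PVX SVU SW PVU PW Xref Uref X U dU) :=
  stmt11_general R QU QdU SVX PVX SVU SW PVU PW hSVX hPVX hSVU hPVU hSW hPW hkX hkU hkW Xref Uref
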